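/- arXiv:1802.06279 — 2 statements merged into one kernel-verified Lean document; each statement's English description precedes it below -/
import Mathlib

section
/- Let RB_n(s) = (n+1)²/(2n+1) · ∏_{i=0}^{n-1} (2 − s/n − i/n)/(2 − i/n) be the relative belief ratio for a future sequence with proportion of ones ȳ = s/n, given all-zero data of length n (f = n, uniform prior). For every c ∈ (0,1], if s/n ≥ c then RB_n(s) ≤ (n+1)²/(2n+1) · (1 − c/2)ⁿ, and this bound converges to 0 as n → ∞. Consequently, for every c ∈ (0,1] there exists N such that for all n > N, no sequence with proportion of ones at least c has RB_n(s) > 1. -/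
open Finset Filter

/-- With `f = n`, all-zero data and uniform prior, let
`RB n s = (n+1)²/(2n+1) · ∏_{i=0}^{n-1} (2 − s/n − i/n)/(2 − i/n)`. For every `c ∈ (0,1]`:
if `s/n ≥ c` then `RB n s ≤ (n+1)²/(2n+1)·(1−c/2)ⁿ`; this bound tends to `0` as `n → ∞`;
and consequently there is `N` such that for all `n > N` no sum `s ≤ n` with proportion
`s/n ≥ c` satisfies `RB n s > 1`. -/
theorem stmt9
    (RB : ℕ → ℕ → ℝ)
    (hRB : ∀ n s, RB n s = (n + 1 : ℝ) ^ 2 / (2 * n + 1)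
      * ∏ i ∈ Finset.range n, ((2 - (s : ℝ) / n - (i : ℝ) / n) / (2 - (i : ℝ) / n)))
    (c : ℝ) (hc0 : 0 < c) (hc1 : c ≤ 1) :
    (∀ n : ℕ, 1 ≤ n → ∀ s ≤ n, c ≤ (s : ℝ) / n →
      RB n s ≤ (n + 1 : ℝ) ^ 2 / (2 * n + 1) * (1 - c / 2) ^ n) ∧
    Tendsto (fun n : ℕ => (n + 1 : ℝ) ^ 2 / (2 * n + 1) * (1 - c / 2) ^ n)
      atTop (nhds 0) ∧
    (∃ N : ℕ, ∀ n > N, ∀ s ≤ n, c ≤ (s : ℝ) / n → ¬ (1 < RB n s)) := by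
  have hr0 : (0:ℝ) ≤ 1 - c / 2 := by linarith
  have hr1 : (1 - c / 2 : ℝ) < 1 := by linarith
  have part1 : ∀ n : ℕ, 1 ≤ n → ∀ s ≤ n, c ≤ (s : ℝ) / n →
      RB n s ≤ (n + 1 : ℝ) ^ 2 / (2 * n + 1) * (1 - c / 2) ^ n := by
    intro n hn s hs hcs
    have hn0 : (0:ℝ) < n := by exact_mod_cast hn
    have hx1 : (s : ℝ) / n ≤ 1 := by
      rw [div_le_one hn0]; exact_mod_cast hs
    rw [hRB]
    have hpre : (0:ℝ) ≤ (n + 1 : ℝ) ^ 2 / (2 * n + 1) := by positivity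
    refine mul_le_mul_of_nonneg_left ?_ hpre
    calc ∏ i ∈ Finset.range n, ((2 - (s : ℝ) / n - (i : ℝ) / n) / (2 - (i : ℝ) / n))
        ≤ ∏ _i ∈ Finset.range n, (1 - c / 2) := by
          apply Finset.prod_le_prod
          · intro i hi
            have hi' : (i : ℝ) / n < 1 := by
              rw [div_lt_one hn0]
              exact_mod_cast Finset.mem_range.mp hi
            have h1 : (0:ℝ) ≤ 2 - (s : ℝ) / n - (i : ℝ) / n := by linarith
            have h2 : (0:ℝ) < 2 - (i : ℝ) / n := by linarith
            positivity
          · intro i hi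
            have hi0 : (0:ℝ) ≤ (i : ℝ) / n := by positivity
            have hi' : (i : ℝ) / n < 1 := by
              rw [div_lt_one hn0]
              exact_mod_cast Finset.mem_range.mp hi
            have h2 : (0:ℝ) < 2 - (i : ℝ) / n := by linarith
            rw [div_le_iff₀ h2]
            have : c * (2 - (i : ℝ) / n) ≤ c * 2 :=
              mul_le_mul_of_nonneg_left (by linarith) hc0.le
            nlinarith
      _ = (1 - c / 2) ^ n := by
          rw [Finset.prod_const, Finset.card_range]
  have part2 : Tendsto (fun n : ℕ => (n + 1 : ℝ) ^ 2 / (2 * n + 1) * (1 - c / 2) ^ n)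
      atTop (nhds 0) := by
    have hmain : Tendsto (fun n : ℕ => 2 * ((n : ℝ) ^ 2 * (1 - c / 2) ^ n))
        atTop (nhds 0) := by
      have := (tendsto_pow_const_mul_const_pow_of_abs_lt_one 2
        (r := 1 - c / 2) (by rw [abs_of_nonneg hr0]; exact hr1)).const_mul 2
      simpa using this
    apply squeeze_zero' (g := fun n : ℕ => 2 * ((n : ℝ) ^ 2 * (1 - c / 2) ^ n)) ?_ ?_ hmain
    · filter_upwards with n; positivity
    · filter_upwards [eventually_ge_atTop 1] with n hn
      have hn0 : (1:ℝ) ≤ (n:ℝ) := by exact_mod_cast hn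
      have hd : (0:ℝ) < 2 * n + 1 := by linarith
      have hpn : (0:ℝ) ≤ (1 - c / 2) ^ n := pow_nonneg hr0 n
      have h1 : (n + 1 : ℝ) ^ 2 / (2 * n + 1) ≤ 2 * (n:ℝ) ^ 2 := by
        rw [div_le_iff₀ hd]; nlinarith
      calc (n + 1 : ℝ) ^ 2 / (2 * n + 1) * (1 - c / 2) ^ n
          ≤ 2 * (n:ℝ) ^ 2 * (1 - c / 2) ^ n := mul_le_mul_of_nonneg_right h1 hpn
        _ = 2 * ((n : ℝ) ^ 2 * (1 - c / 2) ^ n) := by ring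
  refine ⟨part1, part2, ?_⟩
  have hev : ∀ᶠ n : ℕ in atTop,
      (n + 1 : ℝ) ^ 2 / (2 * n + 1) * (1 - c / 2) ^ n < 1 :=
    part2.eventually (eventually_lt_nhds one_pos)
  obtain ⟨N, hN⟩ := (hev.and (eventually_ge_atTop 1)).exists_forall_of_atTop
  refine ⟨N, fun n hn s hs hcs hRBgt => ?_⟩
  have ⟨h1, h2⟩ := hN n hn.le
  exact absurd (lt_of_lt_of_le hRBgt (part1 n h2 s hs hcs)) (not_lt.mpr h1.le)
end

section
/- With f = n, all-zero data, and uniform prior, the posterior content of the plausibility set Pl_n = {y ∈ {0,1}ⁿ : RB(y|0,…,0) > 1} converges to 1 as n → ∞. -/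
open Finset Filter

lemma L1 (n k : ℕ) (hk : k ≤ n) : 2 ^ k * n.choose k ≤ (2 * n).choose k := by
  induction k with
  | zero => simp
  | succ k ih =>
    have hk' : k ≤ n := Nat.le_of_succ_le hk
    have h1 := Nat.choose_succ_right_eq n k
    have h2 := Nat.choose_succ_right_eq (2 * n) k
    have hmul : 2 ^ (k+1) * n.choose (k+1) * (k+1) ≤ (2*n).choose (k+1) * (k+1) := by
      calc 2 ^ (k+1) * n.choose (k+1) * (k+1) = 2 ^ k * (n.choose k * (n - k)) * 2 := by
            rw [mul_assoc (2^(k+1)), h1]; ring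
        _ ≤ 2 ^ k * n.choose k * (2 * n - 2 * k) := by
            have : 2 * (n - k) = 2 * n - 2 * k := by omega
            nlinarith [Nat.zero_le (2 ^ k * n.choose k)]
        _ ≤ (2*n).choose k * (2 * n - 2 * k) := Nat.mul_le_mul_right _ (ih hk')
        _ ≤ (2*n).choose k * (2 * n - k) := Nat.mul_le_mul_left _ (by omega)
        _ = (2*n).choose (k+1) * (k+1) := h2.symm
    exact Nat.le_of_mul_le_mul_right hmul (Nat.succ_pos k)

lemma L2 (n k : ℕ) (hk : 2 * k ≤ n) : (2 * n).choose k ≤ 4 ^ k * n.choose k := by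
  induction k with
  | zero => simp
  | succ k ih =>
    have hk' : 2 * k ≤ n := by omega
    have h1 := Nat.choose_succ_right_eq n k
    have h2 := Nat.choose_succ_right_eq (2 * n) k
    have hmul : (2*n).choose (k+1) * (k+1) ≤ 4 ^ (k+1) * n.choose (k+1) * (k+1) := by
      calc (2*n).choose (k+1) * (k+1) = (2*n).choose k * (2 * n - k) := h2
        _ ≤ 4 ^ k * n.choose k * (2 * n - k) := Nat.mul_le_mul_right _ (ih hk')
        _ ≤ 4 ^ k * n.choose k * (4 * (n - k)) := Nat.mul_le_mul_left _ (by omega)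
        _ = 4 ^ (k+1) * (n.choose k * (n - k)) := by ring
        _ = 4 ^ (k+1) * n.choose (k+1) * (k+1) := by rw [← h1]; ring
    exact Nat.le_of_mul_le_mul_right hmul (Nat.succ_pos k)

lemma L3 (n k : ℕ) (hk : k ≤ n) :
    (n + 1 : ℝ) * (n.choose k) / ((2 * n + 1 : ℝ) * ((2 * n).choose k))
      = (n.choose k : ℝ) / ((2 * n + 1).choose k) - (n.choose (k+1) : ℝ) / ((2 * n + 1).choose (k+1)) := by
  have hk2 : k ≤ 2 * n := by omega
  have hc : (0:ℝ) < ((2*n).choose k : ℝ) := by exact_mod_cast Nat.choose_pos hk2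
  have hd : (0:ℝ) < ((2*n+1).choose k : ℝ) := by exact_mod_cast Nat.choose_pos (by omega)
  have he : (0:ℝ) < ((2*n+1).choose (k+1) : ℝ) := by exact_mod_cast Nat.choose_pos (by omega)
  have hA : ((2*n).choose k : ℝ) * (2*n+1) = ((2*n+1).choose k : ℝ) * (2*n+1-k) := by
    have h := congrArg (Nat.cast : ℕ → ℝ) (Nat.choose_mul_succ_eq (2*n) k)
    push_cast [Nat.cast_sub (show k ≤ 2*n+1 by omega)] at h
    linarith [h]
  have hB : ((2*n+1).choose (k+1) : ℝ) * (k+1) = ((2*n+1).choose k : ℝ) * (2*n+1-k) := by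
    have h := congrArg (Nat.cast : ℕ → ℝ) (Nat.choose_succ_right_eq (2*n+1) k)
    push_cast [Nat.cast_sub (show k ≤ 2*n+1 by omega)] at h
    linarith [h]
  have hC : ((n).choose (k+1) : ℝ) * (k+1) = ((n).choose k : ℝ) * (n-k) := by
    have h := congrArg (Nat.cast : ℕ → ℝ) (Nat.choose_succ_right_eq n k)
    push_cast [Nat.cast_sub hk] at h
    linarith [h]
  have h2n1 : (0:ℝ) < 2*(n:ℝ)+1 := by positivity
  field_simp
  apply mul_left_cancel₀ (show ((k:ℝ)+1) ≠ 0 by positivity)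
  set a := (n.choose k : ℝ)
  set b := (n.choose (k+1) : ℝ)
  set c := ((2*n).choose k : ℝ)
  set d := ((2*n+1).choose k : ℝ)
  set e := ((2*n+1).choose (k+1) : ℝ)
  linear_combination (((n:ℝ)+1)*a*d - d*(2*(n:ℝ)+1-(k:ℝ))*a) * hB
    - ((k:ℝ)+1)*(a*e - d*b) * hA + d*(2*(n:ℝ)+1-(k:ℝ))*d * hC

lemma L4 (n : ℕ) :
    ∑ k ∈ range (n+1), (n + 1 : ℝ) * (n.choose k) / ((2 * n + 1 : ℝ) * ((2 * n).choose k)) = 1 := by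
  rw [Finset.sum_congr rfl (fun k hk => L3 n k (by simpa [Nat.lt_succ_iff] using hk)),
    Finset.sum_range_sub' (fun k => (n.choose k : ℝ) / ((2*n+1).choose k))]
  simp [Nat.choose_eq_zero_of_lt (show n < n+1 by omega)]

lemma qle (n k : ℕ) (hk : k ≤ n) :
    (n + 1 : ℝ) * (n.choose k) / ((2 * n + 1 : ℝ) * ((2 * n).choose k)) ≤ (1/2) ^ k := by
  have hc : (0:ℝ) < ((2*n).choose k : ℝ) := by
    exact_mod_cast Nat.choose_pos (show k ≤ 2*n by omega)
  have h1 : ((2:ℝ))^k * ((n+1) * (n.choose k)) ≤ (2*n+1) * ((2*n).choose k) := by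
    have := L1 n k hk
    have h2 : (2:ℝ)^k * (n.choose k) ≤ ((2*n).choose k : ℝ) := by exact_mod_cast this
    have h3 : ((n:ℝ)+1) ≤ 2*n+1 := by push_cast; linarith
    calc ((2:ℝ))^k * ((n+1) * (n.choose k)) = (n+1) * ((2:ℝ)^k * (n.choose k)) := by ring
      _ ≤ (n+1) * ((2*n).choose k : ℝ) := by
          apply mul_le_mul_of_nonneg_left h2 (by positivity)
      _ ≤ (2*n+1) * ((2*n).choose k) := by
          apply mul_le_mul_of_nonneg_right h3 (le_of_lt hc)
  rw [div_le_iff₀ (by positivity)]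
  rw [div_pow, one_pow, div_mul_eq_mul_div, le_div_iff₀ (by positivity)]
  linarith [h1]

lemma qnonneg (n k : ℕ) :
    0 ≤ (n + 1 : ℝ) * (n.choose k) / ((2 * n + 1 : ℝ) * ((2 * n).choose k)) := by positivity

/-- With `f = n`, all-zero data and uniform prior: a future sequence with `k` ones has
relative belief ratio `RB n k = (n+1)²/(2n+1)·C(n,k)/C(2n,k)` and the total posterior
predictive probability of all such sequences is `q n k = (n+1)·C(n,k)/((2n+1)·C(2n,k))`.
The posterior content of the plausibility set `Pl_n = {y : RB(y|0,…,0) > 1}`, namely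
`∑_{k ≤ n, RB n k > 1} q n k`, converges to `1` as `n → ∞`. -/
theorem stmt11
    (RB q : ℕ → ℕ → ℝ)
    (hRB : ∀ n k, RB n k
      = (n + 1 : ℝ) ^ 2 / (2 * n + 1) * (n.choose k) / ((2 * n).choose k))
    (hq : ∀ n k, q n k
      = (n + 1 : ℝ) * (n.choose k) / ((2 * n + 1 : ℝ) * ((2 * n).choose k))) :
    Tendsto
      (fun n : ℕ => ∑ k ∈ (Finset.range (n + 1)).filter (fun k => 1 < RB n k), q n k)
      atTop (nhds 1) := by
  rw [Metric.tendsto_atTop]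
  intro ε hε
  obtain ⟨K, hK⟩ := exists_pow_lt_of_lt_one hε (show (1:ℝ)/2 < 1 by norm_num)
  refine ⟨2 * 4 ^ K + 2 * K, fun n hn => ?_⟩
  set F := (Finset.range (n + 1)).filter (fun k => 1 < RB n k) with hF
  -- all k ≤ K are in F
  have hmem : range (K+1) ⊆ F := by
    intro k hk
    rw [Finset.mem_range, Nat.lt_succ_iff] at hk
    have hkn : k ≤ n := by
      have : 1 ≤ 4 ^ K := Nat.one_le_pow _ _ (by norm_num)
      omega
    rw [hF, Finset.mem_filter, Finset.mem_range]
    refine ⟨by omega, ?_⟩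
    rw [hRB]
    have hcpos : (0:ℝ) < ((2*n).choose k : ℝ) := by
      exact_mod_cast Nat.choose_pos (show k ≤ 2*n by omega)
    have hapos : (0:ℝ) < (n.choose k : ℝ) := by exact_mod_cast Nat.choose_pos hkn
    rw [div_mul_eq_mul_div, div_div, lt_div_iff₀ (by positivity), one_mul]
    -- need (2n+1)*C(2n,k) < (n+1)^2 * C(n,k)
    have h2 : ((2*n).choose k : ℝ) ≤ 4^k * (n.choose k) := by
      exact_mod_cast L2 n k (by omega)
    have h4 : (4:ℝ)^k ≤ 4^K := by
      apply pow_le_pow_right₀ (by norm_num) hk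
    have hM : (1:ℝ) ≤ (4:ℝ)^K := one_le_pow₀ (by norm_num)
    have hnn : (2:ℝ) * (4:ℝ)^K + 2*K ≤ (n:ℝ) := by
      have : ((2 * 4 ^ K + 2 * K : ℕ) : ℝ) ≤ (n:ℝ) := by exact_mod_cast hn
      push_cast at this; linarith
    have key : ((2:ℝ)*n+1) * (4:ℝ)^K < ((n:ℝ)+1)^2 := by nlinarith
    calc ((2:ℝ)*n+1) * ((2*n).choose k)
        ≤ (2*n+1) * (4^k * (n.choose k)) := by
          apply mul_le_mul_of_nonneg_left h2 (by positivity)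
      _ ≤ (2*n+1) * (4^K * (n.choose k)) := by
          apply mul_le_mul_of_nonneg_left (mul_le_mul_of_nonneg_right h4 hapos.le) (by positivity)
      _ = ((2*n+1) * 4^K) * (n.choose k) := by ring
      _ < ((n:ℝ)+1)^2 * (n.choose k) := by
          apply mul_lt_mul_of_pos_right key hapos
  -- rewrite q
  have hsum_q : ∀ s : Finset ℕ, ∑ k ∈ s, q n k
      = ∑ k ∈ s, (n + 1 : ℝ) * (n.choose k) / ((2 * n + 1 : ℝ) * ((2 * n).choose k)) :=
    fun s => Finset.sum_congr rfl (fun k _ => hq n k)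
  have hKn : K + 1 ≤ n + 1 := by
    have : 1 ≤ 4 ^ K := Nat.one_le_pow _ _ (by norm_num)
    omega
  -- upper bound : S ≤ 1
  have hupper : ∑ k ∈ F, q n k ≤ 1 := by
    rw [hsum_q]
    calc ∑ k ∈ F, (n + 1 : ℝ) * (n.choose k) / ((2 * n + 1 : ℝ) * ((2 * n).choose k))
        ≤ ∑ k ∈ range (n+1), (n + 1 : ℝ) * (n.choose k) / ((2 * n + 1 : ℝ) * ((2 * n).choose k)) := by
          apply Finset.sum_le_sum_of_subset_of_nonneg (Finset.filter_subset _ _)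
          intro k _ _; exact qnonneg n k
      _ = 1 := L4 n
  -- lower bound
  have hsplit : ∑ k ∈ range (K+1), (n + 1 : ℝ) * (n.choose k) / ((2 * n + 1 : ℝ) * ((2 * n).choose k))
      + ∑ k ∈ Finset.Ico (K+1) (n+1), (n + 1 : ℝ) * (n.choose k) / ((2 * n + 1 : ℝ) * ((2 * n).choose k))
      = 1 := by
    rw [Finset.range_eq_Ico, Finset.sum_Ico_consecutive _ (Nat.zero_le _) hKn,
      ← Finset.range_eq_Ico]
    exact L4 n
  have htail : ∑ k ∈ Finset.Ico (K+1) (n+1), (n + 1 : ℝ) * (n.choose k) / ((2 * n + 1 : ℝ) * ((2 * n).choose k))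
      ≤ (1/2:ℝ)^K := by
    calc ∑ k ∈ Finset.Ico (K+1) (n+1), (n + 1 : ℝ) * (n.choose k) / ((2 * n + 1 : ℝ) * ((2 * n).choose k))
        ≤ ∑ k ∈ Finset.Ico (K+1) (n+1), (1/2:ℝ)^k := by
          apply Finset.sum_le_sum
          intro k hk
          rw [Finset.mem_Ico] at hk
          exact qle n k (by omega)
      _ = ∑ j ∈ range (n+1-(K+1)), (1/2:ℝ)^(K+1+j) := by
          rw [Finset.sum_Ico_eq_sum_range]
      _ = (1/2:ℝ)^(K+1) * ∑ j ∈ range (n+1-(K+1)), (1/2:ℝ)^j := by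
          rw [Finset.mul_sum]
          exact Finset.sum_congr rfl (fun j _ => by rw [pow_add])
      _ ≤ (1/2:ℝ)^(K+1) * 2 := by
          apply mul_le_mul_of_nonneg_left (sum_geometric_two_le _) (by positivity)
      _ = (1/2:ℝ)^K := by
          rw [pow_succ]; ring
  have hlower : 1 - (1/2:ℝ)^K ≤ ∑ k ∈ F, q n k := by
    rw [hsum_q]
    calc 1 - (1/2:ℝ)^K
        ≤ ∑ k ∈ range (K+1), (n + 1 : ℝ) * (n.choose k) / ((2 * n + 1 : ℝ) * ((2 * n).choose k)) := by
          linarith [hsplit, htail]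
      _ ≤ ∑ k ∈ F, (n + 1 : ℝ) * (n.choose k) / ((2 * n + 1 : ℝ) * ((2 * n).choose k)) := by
          apply Finset.sum_le_sum_of_subset_of_nonneg hmem
          intro k _ _; exact qnonneg n k
  rw [Real.dist_eq, abs_lt]
  constructor
  · linarith [hlower, hK]
  · linarith [hupper, hε]
end
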